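/- Let R be a commutative ring, A an R-module, and (mₙ)_{n≥0} a sequence of R-bilinear maps A × A → A such that m₀ is commutative and the family is associative order by order (equivalently, Σₙ ℏⁿ mₙ is an associative product on A[[ℏ]]). Define p(a, b) := m₁(a, b) − m₁(b, a). Then p is a Poisson bracket for the commutative (associative) product m₀: it is antisymmetric, satisfies the Leibniz rule p(m₀(a, b), c) = m₀(a, p(b, c)) + m₀(p(a, c), b), and satisfies the Jacobi identity p(a, p(b, c)) = p(p(a, b), c) + p(b, p(a, c)), for all a, b, c ∈ A. -/

import Mathlib

/-!
Since `m₀` is commutative, the star commutator is `a ⋆ b - b ⋆ a = ℏ p(a, b) + O(ℏ²)`. The Leibniz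
rule and the Jacobi identity for `p` are the leading coefficients of the corresponding identities
for commutators in the associative algebra `(A[[ℏ]], ⋆)`: concretely, the Leibniz rule is an
alternating sum of three instances of the order-one associativity identity, and the Jacobi
identity an alternating sum of the six instances of the order-two identity obtained by permuting
`a, b, c`, in which all terms involving `m₂` cancel by commutativity of `m₀`.
-/

namespace FormalDeformation

open Finset

variable {R A : Type*} [CommSemiring R] [AddCommGroup A] [Module R A]

def IsAssocOrderByOrder (m : ℕ → A →ₗ[R] A →ₗ[R] A) : Prop :=
  ∀ (k : ℕ) (a b c : A),
    ∑ i ∈ range (k + 1), m i (m (k - i) a b) c = ∑ i ∈ range (k + 1), m i a (m (k - i) b c)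

def firstOrderBracket (m : ℕ → A →ₗ[R] A →ₗ[R] A) (a b : A) : A :=
  m 1 a b - m 1 b a

variable {m : ℕ → A →ₗ[R] A →ₗ[R] A}

theorem IsAssocOrderByOrder.order_one (hm : IsAssocOrderByOrder m) (a b c : A) :
    m 0 (m 1 a b) c + m 1 (m 0 a b) c = m 0 a (m 1 b c) + m 1 a (m 0 b c) := by
  simpa [sum_range_succ] using hm 1 a b c

theorem IsAssocOrderByOrder.order_two (hm : IsAssocOrderByOrder m) (a b c : A) :
    m 0 (m 2 a b) c + m 1 (m 1 a b) c + m 2 (m 0 a b) c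
      = m 0 a (m 2 b c) + m 1 a (m 1 b c) + m 2 a (m 0 b c) := by
  simpa [sum_range_succ, add_assoc] using hm 2 a b c

theorem firstOrderBracket_add_swap (a b : A) :
    firstOrderBracket m a b + firstOrderBracket m b a = 0 := by
  simp only [firstOrderBracket]
  abel

theorem firstOrderBracket_leibniz (hcomm : ∀ a b : A, m 0 a b = m 0 b a)
    (hm : IsAssocOrderByOrder m) (a b c : A) :
    firstOrderBracket m (m 0 a b) c
      = m 0 a (firstOrderBracket m b c) + m 0 (firstOrderBracket m a c) b := by
  have h₁ := hm.order_one b a c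
  have h₂ := hm.order_one b c a
  have h₃ := hm.order_one c b a
  simp only [firstOrderBracket, map_sub, LinearMap.sub_apply, hcomm] at h₁ h₂ h₃ ⊢
  linear_combination (norm := abel) h₁ - h₂ + h₃

theorem firstOrderBracket_jacobi (hcomm : ∀ a b : A, m 0 a b = m 0 b a)
    (hm : IsAssocOrderByOrder m) (a b c : A) :
    firstOrderBracket m a (firstOrderBracket m b c)
      = firstOrderBracket m (firstOrderBracket m a b) c
        + firstOrderBracket m b (firstOrderBracket m a c) := by
  have h₁ := hm.order_two a c b
  have h₂ := hm.order_two b a c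
  have h₃ := hm.order_two c b a
  have h₄ := hm.order_two a b c
  have h₅ := hm.order_two b c a
  have h₆ := hm.order_two c a b
  simp only [firstOrderBracket, map_sub, LinearMap.sub_apply, hcomm] at h₁ h₂ h₃ h₄ h₅ h₆ ⊢
  linear_combination (norm := abel) h₁ + h₂ + h₃ - h₄ - h₅ - h₆

end FormalDeformation

theorem quantization_first_order_is_poisson
    (R : Type*) [CommRing R] (A : Type*) [AddCommGroup A] [Module R A]
    (m : ℕ → A →ₗ[R] A →ₗ[R] A)
    (hcomm : ∀ a b : A, m 0 a b = m 0 b a)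
    (hassoc : ∀ (k : ℕ) (a b c : A),
      ∑ i ∈ Finset.range (k + 1), m i (m (k - i) a b) c
        = ∑ i ∈ Finset.range (k + 1), m i a (m (k - i) b c))
    (p : A → A → A)
    (hp : ∀ a b : A, p a b = m 1 a b - m 1 b a) :
    (∀ a b : A, p a b + p b a = 0) ∧
    (∀ a b c : A, p (m 0 a b) c = m 0 a (p b c) + m 0 (p a c) b) ∧
    (∀ a b c : A, p a (p b c) = p (p a b) c + p b (p a c)) := by
  obtain rfl : p = FormalDeformation.firstOrderBracket m := funext₂ hp
  have hm : FormalDeformation.IsAssocOrderByOrder m := hassoc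
  exact ⟨FormalDeformation.firstOrderBracket_add_swap,
    FormalDeformation.firstOrderBracket_leibniz hcomm hm,
    FormalDeformation.firstOrderBracket_jacobi hcomm hm⟩
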